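/- arXiv:2601.18420 — 3 statements merged into one kernel-verified Lean document; each statement's English description precedes it below -/
import Mathlib

section
/- Let f : ℝ^n → ℝ^m be continuously differentiable with Jacobian H(θ) ∈ ℝ^{m×n}, let y ∈ ℝ^m be a fixed target, and let θ₀ ∈ ℝ^n with G₀ = H(θ₀)H(θ₀)ᵀ positive definite. Suppose there exists a constant C with 0 ≤ C < 1/2 such that for all θ with ‖θ − θ₀‖₂ ≤ 3‖y − f(θ₀)‖₂ / √(λ_min(G₀)) one has ‖H(θ) − H(θ₀)‖₂ ≤ (C/3)√(λ_min(G₀)) (Stable Jacobian assumption). Fix ρ ≥ 0, fix an iterate θ_k with ‖θ_k − θ₀‖₂ ≤ 3‖y − f(θ₀)‖₂ / √(λ_min(G₀)), set H_k = H(θ_k), ŷ_k = f(θ_k), G_k = H_k H_kᵀ, assume G_k is positive definite, and define the gradient-regularized natural-gradient iterate θ_{k+1} = θ_k − H_kᵀ (G_k + ρ‖H_kᵀ(ŷ_k − y)‖₂² I)^{-1} (ŷ_k − y). If θ_{k+1} also satisfies ‖θ_{k+1} − θ₀‖₂ ≤ 3‖y − f(θ₀)‖₂ / √(λ_min(G₀)),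 then with ŷ_{k+1} = f(θ_{k+1}) and κ(G_k) = λ_max(G_k)/λ_min(G_k), the per-step error bound ‖ŷ_{k+1} − y‖₂ ≤ (1 + C) · ((2 + C)/(1 + C) + ρ κ(G_k) ‖ŷ_k − y‖₂²) · ‖ŷ_k − y‖₂ holds. -/
/-!
Write `r = f θ_k - y`, `s = ρ‖H_kᵀ r‖²` and `δ = θ_k - θ_{k+1} = H_kᵀ (G_k + s)⁻¹ r`.
Then `r - H_k δ = s (G_k + s)⁻¹ r`, so the linearised residual has norm at most
`s ‖r‖ / λ_min(G_k) ≤ ρ κ(G_k) ‖r‖³`. On the ball the Jacobian stays within `2C/3 · √λ_min(G₀)`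
of `H_k`, so by the mean value inequality the linearisation error is at most
`2C/3 · √λ_min(G₀) ‖δ‖`. Finally `√λ_min(G_k) ‖δ‖ ≤ ‖r‖`, and the smallest singular value moves
by at most the norm of the perturbation, so `√λ_min(G_k) ≥ (1 - C/3) √λ_min(G₀)`; the
linearisation error is thus at most `2C/(3 - C) ‖r‖ ≤ (2 + C) ‖r‖`.
-/

open Matrix
open scoped Matrix.Norms.L2Operator

noncomputable def lamMin {m : ℕ} (A : Matrix (Fin m) (Fin m) ℝ) : ℝ :=
  if h : A.IsHermitian then ⨅ i, h.eigenvalues i else 0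

noncomputable def lamMax {m : ℕ} (A : Matrix (Fin m) (Fin m) ℝ) : ℝ :=
  if h : A.IsHermitian then ⨆ i, h.eigenvalues i else 0

open scoped RealInnerProductSpace

namespace Matrix

variable {m n : ℕ}

lemma toEuclideanLin_mul_apply {p : ℕ} (A : Matrix (Fin m) (Fin n) ℝ)
    (B : Matrix (Fin n) (Fin p) ℝ) (x : EuclideanSpace ℝ (Fin p)) :
    toEuclideanLin (A * B) x = toEuclideanLin A (toEuclideanLin B x) := by
  simp

lemma inner_toEuclideanLin_transpose (A : Matrix (Fin m) (Fin n) ℝ)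
    (x : EuclideanSpace ℝ (Fin m)) (y : EuclideanSpace ℝ (Fin n)) :
    ⟪toEuclideanLin Aᵀ x, y⟫ = ⟪x, toEuclideanLin A y⟫ := by
  rw [← conjTranspose_eq_transpose_of_trivial, toEuclideanLin_conjTranspose_eq_adjoint,
    LinearMap.adjoint_inner_left]

lemma l2_opNorm_transpose (A : Matrix (Fin m) (Fin n) ℝ) : ‖Aᵀ‖ = ‖A‖ := by
  rw [← conjTranspose_eq_transpose_of_trivial, l2_opNorm_conjTranspose]

lemma inner_toEuclideanLin_mul_transpose_self (A : Matrix (Fin m) (Fin n) ℝ)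
    (x : EuclideanSpace ℝ (Fin m)) :
    ⟪x, toEuclideanLin (A * Aᵀ) x⟫ = ‖toEuclideanLin Aᵀ x‖ ^ 2 := by
  rw [toEuclideanLin_mul_apply, ← inner_toEuclideanLin_transpose, real_inner_self_eq_norm_sq]

lemma isHermitian_mul_transpose_self (A : Matrix (Fin m) (Fin n) ℝ) : (A * Aᵀ).IsHermitian := by
  simpa only [conjTranspose_eq_transpose_of_trivial] using isHermitian_mul_conjTranspose_self A

namespace IsHermitian

variable {A : Matrix (Fin m) (Fin m) ℝ}

lemma toEuclideanLin_eigenvectorBasis (hA : A.IsHermitian) (i : Fin m) :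
    toEuclideanLin A (hA.eigenvectorBasis i) = hA.eigenvalues i • hA.eigenvectorBasis i :=
  congrArg (WithLp.toLp 2) (hA.mulVec_eigenvectorBasis i)

lemma inner_toEuclideanLin_self_eq_sum (hA : A.IsHermitian) (x : EuclideanSpace ℝ (Fin m)) :
    ⟪x, toEuclideanLin A x⟫ = ∑ i, hA.eigenvalues i * ⟪hA.eigenvectorBasis i, x⟫ ^ 2 := by
  have hS : (toEuclideanLin A).IsSymmetric := isSymmetric_toEuclideanLin_iff.mpr hA
  rw [← hA.eigenvectorBasis.sum_inner_mul_inner]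
  refine Finset.sum_congr rfl fun i _ => ?_
  rw [← hS, toEuclideanLin_eigenvectorBasis, real_inner_smul_left, real_inner_comm x]
  ring

end IsHermitian

end Matrix

section Rayleigh

variable {m : ℕ} {A : Matrix (Fin m) (Fin m) ℝ}

lemma lamMin_mul_norm_sq_le (hA : A.IsHermitian) (x : EuclideanSpace ℝ (Fin m)) :
    lamMin A * ‖x‖ ^ 2 ≤ ⟪x, toEuclideanLin A x⟫ := by
  rw [hA.inner_toEuclideanLin_self_eq_sum, ← hA.eigenvectorBasis.sum_sq_inner_right,
    Finset.mul_sum, lamMin, dif_pos hA]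
  gcongr with i
  exact ciInf_le (Finite.bddBelow_range _) i

lemma inner_le_lamMax_mul_norm_sq (hA : A.IsHermitian) (x : EuclideanSpace ℝ (Fin m)) :
    ⟪x, toEuclideanLin A x⟫ ≤ lamMax A * ‖x‖ ^ 2 := by
  rw [hA.inner_toEuclideanLin_self_eq_sum, ← hA.eigenvectorBasis.sum_sq_inner_right,
    Finset.mul_sum, lamMax, dif_pos hA]
  gcongr with i
  exact le_ciSup (Finite.bddAbove_range _) i

variable [Nonempty (Fin m)]

lemma le_lamMin (hA : A.IsHermitian) {c : ℝ}
    (h : ∀ x : EuclideanSpace ℝ (Fin m), c * ‖x‖ ^ 2 ≤ ⟪x, toEuclideanLin A x⟫) :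
    c ≤ lamMin A := by
  rw [lamMin, dif_pos hA]
  refine le_ciInf fun i => ?_
  simpa [hA.toEuclideanLin_eigenvectorBasis, real_inner_smul_right,
    hA.eigenvectorBasis.orthonormal.1 i] using h (hA.eigenvectorBasis i)

lemma lamMin_pos (hA : A.PosDef) : 0 < lamMin A := by
  rw [lamMin, dif_pos hA.isHermitian]
  obtain ⟨i, hi⟩ := exists_eq_ciInf_of_finite (f := hA.isHermitian.eigenvalues)
  exact hi ▸ hA.eigenvalues_pos i

end Rayleigh

lemma sqrt_mul_le_of_mul_sq_le {a b c : ℝ} (hb : 0 ≤ b) (hc : 0 ≤ c) (h : a * b ^ 2 ≤ c ^ 2) :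
    √a * b ≤ c := by
  calc √a * b = √(a * b ^ 2) := by rw [Real.sqrt_mul' _ (sq_nonneg _), Real.sqrt_sq hb]
    _ ≤ √(c ^ 2) := Real.sqrt_le_sqrt h
    _ = c := Real.sqrt_sq hc

section Gram

variable {m n : ℕ}

lemma sqrt_lamMin_mul_norm_le (A : Matrix (Fin m) (Fin n) ℝ) (x : EuclideanSpace ℝ (Fin m)) :
    √(lamMin (A * Aᵀ)) * ‖x‖ ≤ ‖toEuclideanLin Aᵀ x‖ := by
  refine sqrt_mul_le_of_mul_sq_le (norm_nonneg _) (norm_nonneg _) ?_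
  rw [← inner_toEuclideanLin_mul_transpose_self]
  exact lamMin_mul_norm_sq_le (isHermitian_mul_transpose_self A) x

lemma norm_sq_toEuclideanLin_transpose_le (A : Matrix (Fin m) (Fin n) ℝ)
    (x : EuclideanSpace ℝ (Fin m)) :
    ‖toEuclideanLin Aᵀ x‖ ^ 2 ≤ lamMax (A * Aᵀ) * ‖x‖ ^ 2 := by
  rw [← inner_toEuclideanLin_mul_transpose_self]
  exact inner_le_lamMax_mul_norm_sq (isHermitian_mul_transpose_self A) x

lemma sqrt_lamMin_sub_le [Nonempty (Fin m)] (A B : Matrix (Fin m) (Fin n) ℝ) :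
    √(lamMin (A * Aᵀ)) - ‖A - B‖ ≤ √(lamMin (B * Bᵀ)) := by
  set c := √(lamMin (A * Aᵀ)) - ‖A - B‖
  rcases le_or_gt c 0 with hc | hc
  · exact hc.trans (Real.sqrt_nonneg _)
  refine Real.le_sqrt_of_sq_le (le_lamMin (isHermitian_mul_transpose_self B) fun x => ?_)
  have hcx : c * ‖x‖ ≤ ‖toEuclideanLin Bᵀ x‖ := by
    have hdiff : ‖toEuclideanLin Aᵀ x - toEuclideanLin Bᵀ x‖ ≤ ‖A - B‖ * ‖x‖ := by
      rw [← LinearMap.sub_apply, ← map_sub, ← transpose_sub, ← l2_opNorm_transpose]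
      exact l2_opNorm_mulVec _ x
    have := sqrt_lamMin_mul_norm_le A x
    have := norm_sub_norm_le (toEuclideanLin Aᵀ x) (toEuclideanLin Bᵀ x)
    linarith
  rw [inner_toEuclideanLin_mul_transpose_self, ← mul_pow]
  exact pow_le_pow_left₀ (by positivity) hcx 2

end Gram

section RegularizedStep

variable {m n : ℕ}

lemma Matrix.PosDef.add_smul_one {G : Matrix (Fin m) (Fin m) ℝ} (hG : G.PosDef) {s : ℝ}
    (hs : 0 ≤ s) : (G + s • 1).PosDef :=
  hG.add_posSemidef (PosSemidef.one.smul hs)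

lemma inner_toEuclideanLin_add_smul_one (G : Matrix (Fin m) (Fin m) ℝ) (s : ℝ)
    (x : EuclideanSpace ℝ (Fin m)) :
    ⟪x, toEuclideanLin (G + s • 1) x⟫ = ⟪x, toEuclideanLin G x⟫ + s * ‖x‖ ^ 2 := by
  simp [inner_add_right, real_inner_smul_right]

lemma lamMin_le_lamMin_add_smul_one [Nonempty (Fin m)] {G : Matrix (Fin m) (Fin m) ℝ}
    (hG : G.IsHermitian) {s : ℝ} (hs : 0 ≤ s) : lamMin G ≤ lamMin (G + s • 1) := by
  refine le_lamMin (hG.add (isHermitian_one.smul (.all s))) fun x => ?_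
  rw [inner_toEuclideanLin_add_smul_one]
  nlinarith [lamMin_mul_norm_sq_le hG x, sq_nonneg ‖x‖]

lemma lamMin_mul_norm_toEuclideanLin_inv_le {M : Matrix (Fin m) (Fin m) ℝ} (hM : M.PosDef)
    (u : EuclideanSpace ℝ (Fin m)) : lamMin M * ‖toEuclideanLin M⁻¹ u‖ ≤ ‖u‖ := by
  set v := toEuclideanLin M⁻¹ u
  have hMv : toEuclideanLin M v = u := by
    rw [← toEuclideanLin_mul_apply, mul_nonsing_inv _ hM.det_pos.ne'.isUnit]
    simp
  have h := lamMin_mul_norm_sq_le hM.isHermitian v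
  rw [hMv] at h
  have := real_inner_le_norm v u
  rcases (norm_nonneg v).eq_or_lt with hv | hv
  · simp [← hv]
  · nlinarith

noncomputable def regularizedStep (A : Matrix (Fin m) (Fin n) ℝ) (s : ℝ)
    (r : EuclideanSpace ℝ (Fin m)) : EuclideanSpace ℝ (Fin n) :=
  toEuclideanLin (Aᵀ * (A * Aᵀ + s • 1)⁻¹) r

variable (A : Matrix (Fin m) (Fin n) ℝ) {s : ℝ} (r : EuclideanSpace ℝ (Fin m))

lemma sub_toEuclideanLin_regularizedStep (hM : IsUnit (A * Aᵀ + s • 1).det) :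
    r - toEuclideanLin A (regularizedStep A s r) = s • toEuclideanLin (A * Aᵀ + s • 1)⁻¹ r := by
  have key : A * (Aᵀ * (A * Aᵀ + s • 1)⁻¹) = 1 - s • (A * Aᵀ + s • 1)⁻¹ := by
    have h := mul_nonsing_inv _ hM
    rw [add_mul, smul_mul, Matrix.one_mul] at h
    rw [← Matrix.mul_assoc, eq_sub_iff_add_eq, h]
  rw [regularizedStep, ← toEuclideanLin_mul_apply, key]
  simp

variable [Nonempty (Fin m)]

lemma lamMin_mul_norm_sub_toEuclideanLin_regularizedStep_le (hA : (A * Aᵀ).PosDef) (hs : 0 ≤ s) :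
    lamMin (A * Aᵀ) * ‖r - toEuclideanLin A (regularizedStep A s r)‖ ≤ s * ‖r‖ := by
  have hM := hA.add_smul_one hs
  rw [sub_toEuclideanLin_regularizedStep A r hM.det_pos.ne'.isUnit, norm_smul,
    Real.norm_of_nonneg hs, mul_left_comm]
  gcongr
  calc lamMin (A * Aᵀ) * ‖toEuclideanLin (A * Aᵀ + s • 1)⁻¹ r‖
      ≤ lamMin (A * Aᵀ + s • 1) * ‖toEuclideanLin (A * Aᵀ + s • 1)⁻¹ r‖ := by
        gcongr; exact lamMin_le_lamMin_add_smul_one hA.isHermitian hs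
    _ ≤ ‖r‖ := lamMin_mul_norm_toEuclideanLin_inv_le hM r

lemma sqrt_lamMin_mul_norm_regularizedStep_le (hA : (A * Aᵀ).PosDef) (hs : 0 ≤ s) :
    √(lamMin (A * Aᵀ)) * ‖regularizedStep A s r‖ ≤ ‖r‖ := by
  have hM := hA.add_smul_one hs
  set u := toEuclideanLin (A * Aᵀ + s • 1)⁻¹ r
  have hMu : toEuclideanLin (A * Aᵀ + s • 1) u = r := by
    rw [← toEuclideanLin_mul_apply, mul_nonsing_inv _ hM.det_pos.ne'.isUnit]
    simp
  -- `‖Aᵀ u‖² = ⟪u, A Aᵀ u⟫ ≤ ⟪u, (A Aᵀ + s) u⟫ = ⟪u, r⟫`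
  have hstep : ‖regularizedStep A s r‖ ^ 2 ≤ ‖u‖ * ‖r‖ := by
    have h := inner_toEuclideanLin_add_smul_one (A * Aᵀ) s u
    rw [hMu, inner_toEuclideanLin_mul_transpose_self, ← toEuclideanLin_mul_apply] at h
    rw [regularizedStep]
    nlinarith [real_inner_le_norm u r, sq_nonneg ‖u‖]
  refine sqrt_mul_le_of_mul_sq_le (norm_nonneg _) (norm_nonneg _) ?_
  have hlam := lamMin_le_lamMin_add_smul_one hA.isHermitian hs
  have hu := lamMin_mul_norm_toEuclideanLin_inv_le hM r
  nlinarith [lamMin_pos hA, norm_nonneg r, norm_nonneg u]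

lemma norm_sub_toEuclideanLin_regularizedStep_le (hA : (A * Aᵀ).PosDef) {ρ : ℝ} (hρ : 0 ≤ ρ) :
    ‖r - toEuclideanLin A (regularizedStep A (ρ * ‖toEuclideanLin Aᵀ r‖ ^ 2) r)‖ ≤
      ρ * (lamMax (A * Aᵀ) / lamMin (A * Aᵀ)) * ‖r‖ ^ 2 * ‖r‖ := by
  have hlam := lamMin_pos hA
  calc _ ≤ ρ * ‖toEuclideanLin Aᵀ r‖ ^ 2 * ‖r‖ / lamMin (A * Aᵀ) := by
        rw [le_div_iff₀ hlam, mul_comm]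
        exact lamMin_mul_norm_sub_toEuclideanLin_regularizedStep_le A r hA (by positivity)
    _ ≤ ρ * (lamMax (A * Aᵀ) * ‖r‖ ^ 2) * ‖r‖ / lamMin (A * Aᵀ) := by
        gcongr; exact norm_sq_toEuclideanLin_transpose_le A r
    _ = _ := by ring

lemma sqrt_lamMin_sub_mul_norm_regularizedStep_le (hA : (A * Aᵀ).PosDef) (hs : 0 ≤ s)
    (B : Matrix (Fin m) (Fin n) ℝ) {ε : ℝ} (hAB : ‖A - B‖ ≤ ε) :
    (√(lamMin (B * Bᵀ)) - ε) * ‖regularizedStep A s r‖ ≤ ‖r‖ :=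
  calc _ ≤ √(lamMin (A * Aᵀ)) * ‖regularizedStep A s r‖ := by
        gcongr; linarith [sqrt_lamMin_sub_le B A, norm_sub_rev A B]
    _ ≤ ‖r‖ := sqrt_lamMin_mul_norm_regularizedStep_le A r hA hs

end RegularizedStep

lemma norm_sub_sub_toEuclideanLin_le {m n : ℕ}
    {f : EuclideanSpace ℝ (Fin n) → EuclideanSpace ℝ (Fin m)}
    {H : EuclideanSpace ℝ (Fin n) → Matrix (Fin m) (Fin n) ℝ} {S : Set (EuclideanSpace ℝ (Fin n))}
    (hS : Convex ℝ S) (hf : ∀ θ ∈ S, DifferentiableAt ℝ f θ)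
    (hH : ∀ θ ∈ S, toEuclideanLin (H θ) = (fderiv ℝ f θ).toLinearMap)
    {A : Matrix (Fin m) (Fin n) ℝ} {ε : ℝ} (hε : ∀ θ ∈ S, ‖H θ - A‖ ≤ ε)
    {a b : EuclideanSpace ℝ (Fin n)} (ha : a ∈ S) (hb : b ∈ S) :
    ‖f b - f a - toEuclideanLin A (b - a)‖ ≤ ε * ‖b - a‖ := by
  refine hS.norm_image_sub_le_of_norm_fderiv_le' (φ := (toEuclideanLin A).toContinuousLinearMap)
    hf (fun θ hθ => ?_) ha hb
  have hfderiv : fderiv ℝ f θ = (toEuclideanLin (H θ)).toContinuousLinearMap :=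
    ContinuousLinearMap.coe_injective (hH θ hθ).symm
  rw [hfderiv, ← map_sub, ← map_sub]
  exact hε θ hθ

lemma norm_sub_sub_toEuclideanLin_le_of_stable {m n : ℕ}
    {f : EuclideanSpace ℝ (Fin n) → EuclideanSpace ℝ (Fin m)} (hf : Differentiable ℝ f)
    {H : EuclideanSpace ℝ (Fin n) → Matrix (Fin m) (Fin n) ℝ}
    (hH : ∀ θ, toEuclideanLin (H θ) = (fderiv ℝ f θ).toLinearMap)
    {θ₀ : EuclideanSpace ℝ (Fin n)} {R ε : ℝ} (hstable : ∀ θ, ‖θ - θ₀‖ ≤ R → ‖H θ - H θ₀‖ ≤ ε)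
    {a b : EuclideanSpace ℝ (Fin n)} (ha : ‖a - θ₀‖ ≤ R) (hb : ‖b - θ₀‖ ≤ R) :
    ‖f b - f a - toEuclideanLin (H a) (b - a)‖ ≤ 2 * ε * ‖b - a‖ := by
  refine norm_sub_sub_toEuclideanLin_le (convex_closedBall θ₀ R) (fun θ _ => hf θ)
    (fun θ _ => hH θ) (fun θ hθ => ?_) (mem_closedBall_iff_norm.mpr ha)
    (mem_closedBall_iff_norm.mpr hb)
  calc ‖H θ - H a‖ ≤ ‖H θ - H θ₀‖ + ‖H θ₀ - H a‖ := norm_sub_le_norm_sub_add_norm_sub ..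
    _ ≤ 2 * ε := by
      rw [norm_sub_rev (H θ₀)]
      linarith [hstable θ (mem_closedBall_iff_norm.mp hθ), hstable a ha]

theorem stmt_0_general {n m : ℕ}
    (f : EuclideanSpace ℝ (Fin n) → EuclideanSpace ℝ (Fin m)) (hf : ContDiff ℝ 1 f)
    (H : EuclideanSpace ℝ (Fin n) → Matrix (Fin m) (Fin n) ℝ)
    (hH : ∀ θ, Matrix.toEuclideanLin (H θ) = (fderiv ℝ f θ).toLinearMap)
    (y : EuclideanSpace ℝ (Fin m)) (θ₀ : EuclideanSpace ℝ (Fin n))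
    (C : ℝ) (hC0 : 0 ≤ C) (hC : C < 1 / 2)
    (hstable : ∀ θ : EuclideanSpace ℝ (Fin n),
      ‖θ - θ₀‖ ≤ 3 * ‖y - f θ₀‖ / Real.sqrt (lamMin (H θ₀ * (H θ₀)ᵀ)) →
      ‖H θ - H θ₀‖ ≤ C / 3 * Real.sqrt (lamMin (H θ₀ * (H θ₀)ᵀ)))
    (ρ : ℝ) (hρ : 0 ≤ ρ)
    (θk : EuclideanSpace ℝ (Fin n))
    (hθk : ‖θk - θ₀‖ ≤ 3 * ‖y - f θ₀‖ / Real.sqrt (lamMin (H θ₀ * (H θ₀)ᵀ)))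
    (hGk : (H θk * (H θk)ᵀ).PosDef)
    (θk1 : EuclideanSpace ℝ (Fin n))
    (hstep : θk1 = θk - Matrix.toEuclideanLin
        ((H θk)ᵀ * (H θk * (H θk)ᵀ +
          (ρ * ‖Matrix.toEuclideanLin (H θk)ᵀ (f θk - y)‖ ^ 2) •
            (1 : Matrix (Fin m) (Fin m) ℝ))⁻¹)
        (f θk - y))
    (hθk1 : ‖θk1 - θ₀‖ ≤ 3 * ‖y - f θ₀‖ / Real.sqrt (lamMin (H θ₀ * (H θ₀)ᵀ))) :
    ‖f θk1 - y‖ ≤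
      (1 + C) * ((2 + C) / (1 + C) +
        ρ * (lamMax (H θk * (H θk)ᵀ) / lamMin (H θk * (H θk)ᵀ)) * ‖f θk - y‖ ^ 2) *
      ‖f θk - y‖ := by
  rcases isEmpty_or_nonempty (Fin m) with hm | hm
  · simp [Subsingleton.elim (f θk1 - y) 0, Subsingleton.elim (f θk - y) 0]
  set σ₀ := √(lamMin (H θ₀ * (H θ₀)ᵀ))
  set r := f θk - y
  set δ := regularizedStep (H θk) (ρ * ‖toEuclideanLin (H θk)ᵀ r‖ ^ 2) r
  have hθδ : θk1 - θk = -δ := by rw [hstep, sub_sub_cancel_left]; rfl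
  have hlin := norm_sub_sub_toEuclideanLin_le_of_stable (hf.differentiable one_ne_zero) hH
    hstable hθk hθk1
  rw [hθδ, norm_neg, map_neg, sub_neg_eq_add] at hlin
  have hδ : (σ₀ - C / 3 * σ₀) * ‖δ‖ ≤ ‖r‖ :=
    sqrt_lamMin_sub_mul_norm_regularizedStep_le _ _ hGk (by positivity) _ (hstable θk hθk)
  have hres := norm_sub_toEuclideanLin_regularizedStep_le (H θk) r hGk hρ
  calc ‖f θk1 - y‖
      = ‖(r - toEuclideanLin (H θk) δ) + (f θk1 - f θk + toEuclideanLin (H θk) δ)‖ := by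
        congr 1; simp only [r]; abel
    _ ≤ ‖r - toEuclideanLin (H θk) δ‖ + ‖f θk1 - f θk + toEuclideanLin (H θk) δ‖ :=
        norm_add_le _ _
    _ ≤ _ := by
        have hC' : 2 * (C / 3) ≤ (2 + C) * (1 - C / 3) := by nlinarith
        rw [mul_add, mul_div_cancel₀ _ (by positivity)]
        nlinarith [(norm_nonneg _).trans hres, mul_le_mul_of_nonneg_right hC'
          (mul_nonneg (Real.sqrt_nonneg (lamMin (H θ₀ * (H θ₀)ᵀ))) (norm_nonneg δ))]

/-- Per-step error bound for gradient-regularized natural gradients: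
under the Stable Jacobian assumption (constant `0 ≤ C < 1/2`), if `θ_k` and the
GRNG iterate `θ_{k+1} = θ_k − Hₖᵀ(Gₖ + ρ‖Hₖᵀ(ŷₖ − y)‖²I)⁻¹(ŷₖ − y)` both lie in
the ball of radius `3‖y − f(θ₀)‖/√(λ_min(G₀))` around `θ₀`, then
`‖ŷ_{k+1} − y‖ ≤ (1+C)((2+C)/(1+C) + ρ κ(Gₖ)‖ŷₖ − y‖²)‖ŷₖ − y‖`. -/
theorem stmt_0 {n m : ℕ}
    (f : EuclideanSpace ℝ (Fin n) → EuclideanSpace ℝ (Fin m)) (hf : ContDiff ℝ 1 f)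
    (H : EuclideanSpace ℝ (Fin n) → Matrix (Fin m) (Fin n) ℝ)
    (hH : ∀ θ, Matrix.toEuclideanLin (H θ) = (fderiv ℝ f θ).toLinearMap)
    (y : EuclideanSpace ℝ (Fin m)) (θ₀ : EuclideanSpace ℝ (Fin n))
    (hG₀ : (H θ₀ * (H θ₀)ᵀ).PosDef)
    (C : ℝ) (hC0 : 0 ≤ C) (hC : C < 1 / 2)
    (hstable : ∀ θ : EuclideanSpace ℝ (Fin n),
      ‖θ - θ₀‖ ≤ 3 * ‖y - f θ₀‖ / Real.sqrt (lamMin (H θ₀ * (H θ₀)ᵀ)) →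
      ‖H θ - H θ₀‖ ≤ C / 3 * Real.sqrt (lamMin (H θ₀ * (H θ₀)ᵀ)))
    (ρ : ℝ) (hρ : 0 ≤ ρ)
    (θk : EuclideanSpace ℝ (Fin n))
    (hθk : ‖θk - θ₀‖ ≤ 3 * ‖y - f θ₀‖ / Real.sqrt (lamMin (H θ₀ * (H θ₀)ᵀ)))
    (hGk : (H θk * (H θk)ᵀ).PosDef)
    (θk1 : EuclideanSpace ℝ (Fin n))
    (hstep : θk1 = θk - Matrix.toEuclideanLin
        ((H θk)ᵀ * (H θk * (H θk)ᵀ +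
          (ρ * ‖Matrix.toEuclideanLin (H θk)ᵀ (f θk - y)‖ ^ 2) •
            (1 : Matrix (Fin m) (Fin m) ℝ))⁻¹)
        (f θk - y))
    (hθk1 : ‖θk1 - θ₀‖ ≤ 3 * ‖y - f θ₀‖ / Real.sqrt (lamMin (H θ₀ * (H θ₀)ᵀ))) :
    ‖f θk1 - y‖ ≤
      (1 + C) * ((2 + C) / (1 + C) +
        ρ * (lamMax (H θk * (H θk)ᵀ) / lamMin (H θk * (H θk)ᵀ)) * ‖f θk - y‖ ^ 2) *
      ‖f θk - y‖ :=
  stmt_0_general f hf H hH y θ₀ C hC0 hC hstable ρ hρ θk hθk hGk θk1 hstep hθk1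
end

section
/- Let Σ ∈ ℝ^{n×n}, H ∈ ℝ^{m×n}, and let R ∈ ℝ^{m×m} be invertible with S = HΣHᵀ + R invertible. Let μ⁻ ∈ ℝ^n, ŷ, y ∈ ℝ^m, define the Kalman gain K = ΣHᵀS^{-1}, the posterior covariance Σ' = Σ − KHΣ, and the gradient vector g = HᵀR^{-1}(ŷ − y). Then the Kalman mean update μ = μ⁻ + K(y − ŷ) satisfies μ = μ⁻ − Σ' g. -/
open Matrix

lemma kalman_matrix_id {n m : ℕ} (Sig : Matrix (Fin n) (Fin n) ℝ)
    (H : Matrix (Fin m) (Fin n) ℝ) (R : Matrix (Fin m) (Fin m) ℝ)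
    (hR : IsUnit R) (hS : IsUnit (H * Sig * Hᵀ + R)) :
    (Sig - (Sig * Hᵀ * (H * Sig * Hᵀ + R)⁻¹) * H * Sig) * Hᵀ * R⁻¹ =
      Sig * Hᵀ * (H * Sig * Hᵀ + R)⁻¹ := by
  have hRd : IsUnit R.det := (isUnit_iff_isUnit_det R).mp hR
  have hSd : IsUnit (H * Sig * Hᵀ + R).det := (isUnit_iff_isUnit_det _).mp hS
  have h1 : (H * Sig * Hᵀ + R)⁻¹ * (H * Sig * Hᵀ + R) = 1 := nonsing_inv_mul _ hSd
  have h2 : R * R⁻¹ = 1 := mul_nonsing_inv _ hRd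
  have key : Sig * Hᵀ = Sig * Hᵀ * (H * Sig * Hᵀ + R)⁻¹ * (H * Sig * Hᵀ + R) := by
    rw [Matrix.mul_assoc (Sig * Hᵀ), h1, Matrix.mul_one]
  calc (Sig - (Sig * Hᵀ * (H * Sig * Hᵀ + R)⁻¹) * H * Sig) * Hᵀ * R⁻¹
      = Sig * Hᵀ * R⁻¹ - Sig * Hᵀ * (H * Sig * Hᵀ + R)⁻¹ * (H * Sig * Hᵀ) * R⁻¹ := by
        simp only [Matrix.sub_mul, Matrix.mul_assoc]
    _ = (Sig * Hᵀ * (H * Sig * Hᵀ + R)⁻¹ * (H * Sig * Hᵀ + R)) * R⁻¹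
          - Sig * Hᵀ * (H * Sig * Hᵀ + R)⁻¹ * (H * Sig * Hᵀ) * R⁻¹ := by rw [← key]
    _ = Sig * Hᵀ * (H * Sig * Hᵀ + R)⁻¹ * (R * R⁻¹) := by
        simp only [Matrix.add_mul, Matrix.mul_add, Matrix.mul_assoc]; abel
    _ = Sig * Hᵀ * (H * Sig * Hᵀ + R)⁻¹ := by rw [h2, Matrix.mul_one]

/-- The Kalman mean update `μ = μ⁻ + K(y − ŷ)` equals the
preconditioned descent step `μ = μ⁻ − Σ' g` with `g = HᵀR⁻¹(ŷ − y)`,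
`K = ΣHᵀ(HΣHᵀ + R)⁻¹` and `Σ' = Σ − KHΣ`. -/
theorem stmt_6 {n m : ℕ} (Sig : Matrix (Fin n) (Fin n) ℝ)
    (H : Matrix (Fin m) (Fin n) ℝ) (R : Matrix (Fin m) (Fin m) ℝ)
    (hR : IsUnit R) (hS : IsUnit (H * Sig * Hᵀ + R))
    (μminus : Fin n → ℝ) (yhat y : Fin m → ℝ) :
    μminus + (Sig * Hᵀ * (H * Sig * Hᵀ + R)⁻¹).mulVec (y - yhat) =
      μminus - (Sig - (Sig * Hᵀ * (H * Sig * Hᵀ + R)⁻¹) * H * Sig).mulVec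
        (Hᵀ.mulVec (R⁻¹.mulVec (yhat - y))) := by
  have h := kalman_matrix_id Sig H R hR hS
  have : (Sig - (Sig * Hᵀ * (H * Sig * Hᵀ + R)⁻¹) * H * Sig).mulVec
        (Hᵀ.mulVec (R⁻¹.mulVec (yhat - y)))
      = ((Sig - (Sig * Hᵀ * (H * Sig * Hᵀ + R)⁻¹) * H * Sig) * Hᵀ * R⁻¹).mulVec
        (yhat - y) := by
    rw [mulVec_mulVec, mulVec_mulVec, Matrix.mul_assoc]
  rw [this, h]
  have hy : yhat - y = -(y - yhat) := by ring_nf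
  rw [hy, mulVec_neg, sub_neg_eq_add]
end

section
/- Let A ∈ ℝ^{n×n} be invertible with n ≥ 2, and set α = 1 / Tr(AᵀA) and X_0 = αAᵀ. Then ‖I − AX_0‖₂ < 1. -/
/-!
`A (Aᵀ / Tr(AᵀA)) = B / Tr B` with `B = AAᵀ` positive definite, and conjugating by the unitary
that diagonalises `B` preserves the L2 operator norm, so `‖I − B / Tr B‖₂ = maxᵢ |1 − λᵢ / Tr B|`
over the eigenvalues `λᵢ` of `B`. Each `λᵢ` is positive and, since `n ≥ 2`, strictly smaller than
the trace `∑ⱼ λⱼ`, so every `|1 − λᵢ / Tr B|` is less than `1`.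
-/

open Matrix
open scoped Matrix.Norms.L2Operator

open Unitary in
theorem CStarRing.norm_conjStarAlgAut {S E : Type*} [NormedRing E] [StarRing E] [CStarRing E]
    [SMul S E] [IsScalarTower S E E] [SMulCommClass S E E] (u : unitary E) (x : E) :
    ‖conjStarAlgAut S E u x‖ = ‖x‖ := by
  rw [conjStarAlgAut_apply, norm_mul_mem_unitary _ (star_mem u.2), norm_coe_unitary_mul]

namespace Matrix

open scoped ComplexOrder

variable {𝕜 n : Type*} [RCLike 𝕜] [Fintype n] [DecidableEq n]

theorem IsHermitian.l2_opNorm_one_sub_smul {B : Matrix n n 𝕜} (hB : B.IsHermitian) (c : ℝ) :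
    ‖1 - c • B‖ = ‖fun i ↦ 1 - c * hB.eigenvalues i‖ := by
  set U := Unitary.conjStarAlgAut 𝕜 (Matrix n n 𝕜) hB.eigenvectorUnitary
  have hdiag : 1 - (c : 𝕜) • diagonal (RCLike.ofReal ∘ hB.eigenvalues) =
      diagonal (RCLike.ofReal ∘ fun i ↦ 1 - c * hB.eigenvalues i : n → 𝕜) := by
    ext i j
    by_cases h : i = j <;> simp [h]
  have hconj : 1 - c • B = U (diagonal (RCLike.ofReal ∘ fun i ↦ 1 - c * hB.eigenvalues i : n → 𝕜)) := by
    rw [← hdiag, map_sub, map_one, map_smul, ← hB.spectral_theorem,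
      RCLike.real_smul_eq_coe_smul (K := 𝕜)]
  rw [hconj, CStarRing.norm_conjStarAlgAut, l2_opNorm_diagonal]
  simp only [Pi.norm_def, Function.comp_apply]
  congr! 3 with i
  exact NNReal.eq (RCLike.norm_ofReal _)

theorem PosDef.eigenvalues_lt_re_trace [Nontrivial n] {B : Matrix n n 𝕜} (hB : B.PosDef)
    (i : n) : hB.1.eigenvalues i < RCLike.re B.trace := by
  obtain ⟨j, hji⟩ := exists_ne i
  rw [hB.1.trace_eq_sum_eigenvalues, map_sum]
  simp only [RCLike.ofReal_re]
  exact Finset.single_lt_sum hji (Finset.mem_univ i) (Finset.mem_univ j)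
    (hB.eigenvalues_pos j) fun k _ _ ↦ (hB.eigenvalues_pos k).le

end Matrix

/-- For invertible `A ∈ ℝ^{n×n}` with `n ≥ 2`, the initialization
`X₀ = Aᵀ / Tr(AᵀA)` for Newton–Schulz satisfies `‖I − AX₀‖₂ < 1`. -/
theorem stmt_13 {n : ℕ} (hn : 2 ≤ n) (A : Matrix (Fin n) (Fin n) ℝ) (hA : IsUnit A) :
    ‖(1 : Matrix (Fin n) (Fin n) ℝ) - A * ((1 / (Aᵀ * A).trace) • Aᵀ)‖ < 1 := by
  have : Nontrivial (Fin n) := Fin.nontrivial_iff_two_le.2 hn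
  have hB : (A * Aᵀ).PosDef := PosDef.mul_conjTranspose_self A (vecMul_injective_iff_isUnit.2 hA)
  have hlt (i : Fin n) : hB.1.eigenvalues i < (Aᵀ * A).trace := by
    simpa [trace_mul_comm A] using hB.eigenvalues_lt_re_trace i
  rw [Matrix.mul_smul, hB.1.l2_opNorm_one_sub_smul, pi_norm_lt_iff one_pos]
  intro i
  have hpos := hB.eigenvalues_pos i
  have ht := hpos.trans (hlt i)
  rw [Real.norm_eq_abs, abs_lt, one_div, ← div_eq_inv_mul, lt_sub_iff_add_lt, sub_lt_self_iff]
  exact ⟨by linarith [(div_lt_one ht).2 (hlt i)], div_pos hpos ht⟩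
end
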